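/- Let N be a lattice with dual M, S a finite set, u : S → M, Δ a fan in N_ℝ, and σ ∈ Σ(Δ, u) = {σ₁ ∩ σ₂ : σ₁ ∈ Δ, σ₂ ∈ Σ(u)}. Then: (b) there exists ω_σ ∈ M such that u(i) − ω_σ ∈ σ^∨ for all i ∈ S, and u(i) − ω_σ ∈ σ^⊥ ∩ M for at least one i ∈ S; (c) if ω'_σ also satisfies these two conditions, then ω_σ − ω'_σ ∈ σ^⊥ ∩ M; (d) consequently the set S^σ = {i ∈ S : u(i) − ω_σ ∈ σ^⊥ ∩ M} is nonempty and independent of the choice of such ω_σ. -/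

import Mathlib

/-! Every cone of `Σ(Δ, u)` lies in a cone of the normal fan of some face `Q` of `P(u)`, and
any vertex `u i₀` of `Q` serves as `ω_σ`: on that cone every `u i - u i₀` is nonnegative.
Two admissible shifts `ω, ω'` are each attained by some `u j`, `u j'` on `σ` and bounded by
all of them, so `ω ≤ u j' = ω' ≤ u j = ω` there; this gives (c), and (d) follows. -/

open scoped TensorProduct

noncomputable section

/-- The real scalar extension `N_ℝ = ℝ ⊗_ℤ N` of a lattice `N`. -/
abbrev NReal (N : Type*) [AddCommGroup N] := ℝ ⊗[ℤ] N

/-- A lattice linear functional `m ∈ M = Hom(N, ℤ)` extended to `N_ℝ`. -/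
def pairR {N : Type*} [AddCommGroup N] (m : Module.Dual ℤ N) :
    Module.Dual ℝ (NReal N) :=
  (Algebra.TensorProduct.rid ℤ ℝ ℝ).toLinearMap ∘ₗ LinearMap.baseChange ℝ m

variable {N : Type*} [AddCommGroup N] [Module.Free ℤ N] [Module.Finite ℤ N]
  {S : Type} [Fintype S] [Nonempty S]

/-- The polytope `P(u) ⊆ M_ℝ`: the convex hull of the (real extensions of the) lattice
points `u i ∈ M`. -/
def polytopeOf (u : S → Module.Dual ℤ N) : Set (Module.Dual ℝ (NReal N)) :=
  convexHull ℝ (Set.range fun i => pairR (u i))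

/-- Faces of the polytope `P(u)`: sets of minimizers of some `x ∈ N_ℝ`. -/
def IsPolytopeFace (u : S → Module.Dual ℤ N) (Q : Set (Module.Dual ℝ (NReal N))) :
    Prop :=
  ∃ x : NReal N, Q = {ω ∈ polytopeOf u | ∀ ω' ∈ polytopeOf u, ω x ≤ ω' x}

/-- The (inner) normal fan `Σ(u)` of `P(u)`, a collection of cones in `N_ℝ`. -/
def normalFan (u : S → Module.Dual ℤ N) : Set (Set (NReal N)) :=
  {σ | ∃ Q, IsPolytopeFace u Q ∧
    σ = {x | ∀ ω₁ ∈ polytopeOf u, ∀ ω₂ ∈ Q, 0 ≤ (ω₁ - ω₂) x}}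

/-- The common refinement `Σ(Δ, u) = {σ₁ ∩ σ₂ : σ₁ ∈ Δ, σ₂ ∈ Σ(u)}`. -/
def commonRefinement (Δ : Set (Set (NReal N))) (u : S → Module.Dual ℤ N) :
    Set (Set (NReal N)) :=
  {σ | ∃ σ₁ ∈ Δ, ∃ σ₂ ∈ normalFan u, σ = σ₁ ∩ σ₂}

/-- `ω_σ` satisfies the two conditions of Proposition (b):  `u i − ω_σ ∈ σ^∨` for all
`i ∈ S`, and `u i − ω_σ ∈ σ^⊥ ∩ M` for at least one `i ∈ S`. -/
def IsVertexShift (u : S → Module.Dual ℤ N) (σ : Set (NReal N))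
    (ωσ : Module.Dual ℤ N) : Prop :=
  (∀ i, ∀ x ∈ σ, 0 ≤ pairR (u i - ωσ) x) ∧
  (∃ i, ∀ x ∈ σ, pairR (u i - ωσ) x = 0)

section

variable {N : Type*} [AddCommGroup N] {S : Type}

lemma pairR_sub (m m' : Module.Dual ℤ N) :
    pairR (N := N) (m - m') = pairR m - pairR m' := by
  rw [pairR, pairR, pairR, LinearMap.baseChange_sub, LinearMap.comp_sub]

lemma pairR_sub_apply (m m' : Module.Dual ℤ N) (x : NReal N) :
    pairR (m - m') x = pairR m x - pairR m' x := by
  rw [pairR_sub, LinearMap.sub_apply]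

lemma pairR_mem_polytopeOf (u : S → Module.Dual ℤ N) (i : S) :
    pairR (u i) ∈ polytopeOf u :=
  subset_convexHull ℝ _ ⟨i, rfl⟩

lemma pairR_mem_face_of_forall_le (u : S → Module.Dual ℤ N) (x₀ : NReal N) {i₀ : S}
    (hi₀ : ∀ i, pairR (u i₀) x₀ ≤ pairR (u i) x₀) :
    pairR (u i₀) ∈ {ω ∈ polytopeOf u | ∀ ω' ∈ polytopeOf u, ω x₀ ≤ ω' x₀} := by
  refine ⟨pairR_mem_polytopeOf u i₀, fun ω' hω' => ?_⟩
  have hhalf : Convex ℝ {ω : Module.Dual ℝ (NReal N) | pairR (u i₀) x₀ ≤ ω x₀} :=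
    convex_halfSpace_ge ⟨fun _ _ => rfl, fun _ _ => rfl⟩ _
  exact convexHull_min (by rintro _ ⟨i, rfl⟩; exact hi₀ i) hhalf hω'

lemma IsVertexShift.mono {u : S → Module.Dual ℤ N} {σ τ : Set (NReal N)}
    {ω : Module.Dual ℤ N} (h : IsVertexShift u τ ω) (hστ : σ ⊆ τ) :
    IsVertexShift u σ ω :=
  ⟨fun i x hx => h.1 i x (hστ hx), h.2.imp fun _ hi x hx => hi x (hστ hx)⟩

lemma exists_isVertexShift_of_mem_normalFan [Finite S] [Nonempty S]
    {u : S → Module.Dual ℤ N} {σ : Set (NReal N)} (hσ : σ ∈ normalFan u) :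
    ∃ ω, IsVertexShift u σ ω := by
  obtain ⟨Q, ⟨x₀, rfl⟩, rfl⟩ := hσ
  obtain ⟨i₀, hi₀⟩ := Finite.exists_min fun i => pairR (u i) x₀
  have hface := pairR_mem_face_of_forall_le u x₀ hi₀
  refine ⟨u i₀, fun i x hx => ?_, i₀, fun x _ => ?_⟩
  · rw [pairR_sub_apply]
    exact sub_nonneg.2 (by simpa using hx _ (pairR_mem_polytopeOf u i) _ hface)
  · rw [pairR_sub_apply, sub_self]

lemma exists_isVertexShift_of_mem_commonRefinement [Finite S] [Nonempty S]
    {Δ : Set (Set (NReal N))} {u : S → Module.Dual ℤ N} {σ : Set (NReal N)}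
    (hσ : σ ∈ commonRefinement Δ u) :
    ∃ ω, IsVertexShift u σ ω := by
  obtain ⟨σ₁, -, σ₂, hσ₂, rfl⟩ := hσ
  obtain ⟨ω, hω⟩ := exists_isVertexShift_of_mem_normalFan hσ₂
  exact ⟨ω, hω.mono Set.inter_subset_right⟩

lemma IsVertexShift.pairR_sub_eq_zero {u : S → Module.Dual ℤ N} {σ : Set (NReal N)}
    {ω ω' : Module.Dual ℤ N} (h : IsVertexShift u σ ω) (h' : IsVertexShift u σ ω')
    {x : NReal N} (hx : x ∈ σ) : pairR (ω - ω') x = 0 := by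
  obtain ⟨hge, j, hj⟩ := h
  obtain ⟨hge', j', hj'⟩ := h'
  have h₁ := hge j' x hx
  have h₂ := hge' j x hx
  have h₃ := hj x hx
  have h₄ := hj' x hx
  rw [pairR_sub_apply] at h₁ h₂ h₃ h₄ ⊢
  linarith

lemma IsVertexShift.setOf_eq {u : S → Module.Dual ℤ N} {σ : Set (NReal N)}
    {ω ω' : Module.Dual ℤ N} (h : IsVertexShift u σ ω) (h' : IsVertexShift u σ ω') :
    {i | ∀ x ∈ σ, pairR (u i - ω) x = 0} = {i | ∀ x ∈ σ, pairR (u i - ω') x = 0} := by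
  have hωω' : ∀ i, ∀ x ∈ σ, pairR (u i - ω') x = pairR (u i - ω) x := fun i x hx => by
    have := h.pairR_sub_eq_zero h' hx
    simp only [pairR_sub_apply] at this ⊢
    linarith
  ext i
  exact forall₂_congr fun x hx => by rw [hωω' i x hx]

end

/-- Let `σ ∈ Σ(Δ, u)`.  Then:
(b) there is `ω_σ ∈ M` with `u i − ω_σ ∈ σ^∨` for all `i` and `u i − ω_σ ∈ σ^⊥ ∩ M`
for some `i`;
(c) any two such `ω_σ, ω'_σ` differ by an element of `σ^⊥ ∩ M`;
(d) consequently `S^σ = {i : u i − ω_σ ∈ σ^⊥ ∩ M}` is nonempty and independent of the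
choice of `ω_σ`. -/
theorem stmt16 (u : S → Module.Dual ℤ N) (Δ : Set (Set (NReal N)))
    (σ : Set (NReal N)) (hσ : σ ∈ commonRefinement Δ u) :
    (∃ ωσ : Module.Dual ℤ N, IsVertexShift u σ ωσ) ∧
    (∀ ωσ ωσ' : Module.Dual ℤ N, IsVertexShift u σ ωσ → IsVertexShift u σ ωσ' →
      ∀ x ∈ σ, pairR (ωσ - ωσ') x = 0) ∧
    (∀ ωσ ωσ' : Module.Dual ℤ N, IsVertexShift u σ ωσ → IsVertexShift u σ ωσ' →
      {i | ∀ x ∈ σ, pairR (u i - ωσ) x = 0}.Nonempty ∧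
      {i | ∀ x ∈ σ, pairR (u i - ωσ) x = 0} =
        {i | ∀ x ∈ σ, pairR (u i - ωσ') x = 0}) :=
  ⟨exists_isVertexShift_of_mem_commonRefinement hσ,
    fun _ _ h h' _ hx => h.pairR_sub_eq_zero h' hx,
    fun _ _ h h' => ⟨h.2, h.setOf_eq h'⟩⟩

end
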